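/- Let ρ be a density matrix on ℂ^d with orthonormal eigendecomposition ρ = Σ_i λ_i |λ_i⟩⟨λ_i|, all λ_i strictly positive, let {|b_j⟩} be an orthonormal basis of ℂ^d, and let ρ̃ = Σ_j η_j |b_j⟩⟨b_j| be the effective density matrix of ρ with respect to {|b_j⟩}, with all η_j strictly positive. Then S(ρ) ≤ S(ρ̃): the von Neumann entropy of the effective density matrix is at least that of the original density matrix. -/

import Mathlib

/-!
The matrix `P i j = |⟨λᵢ|bⱼ⟩|²` is doubly stochastic: Parseval's identity in the basis `{bⱼ}`
gives its row sums and in the basis `{λᵢ}` its column sums. Since `η = λ P` and `x ↦ x log x`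
is convex on `[0, ∞)`, Jensen's inequality applied to each column, followed by the row sums,
gives `∑ⱼ η_j log η_j ≤ ∑ᵢ λᵢ log λᵢ`.
-/

open scoped BigOperators

noncomputable section

/-- The inner product ⟨v|w⟩ on ℂ^d (antilinear in the first slot). -/
def braket {d : ℕ} (v w : Fin d → ℂ) : ℂ := ∑ k, (starRingEnd ℂ) (v k) * w k

/-- The rank-one outer product |v⟩⟨v| as a d×d complex matrix. -/
def ketbra {d : ℕ} (v : Fin d → ℂ) : Matrix (Fin d) (Fin d) ℂ :=
  fun i j => v i * (starRingEnd ℂ) (v j)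

/-- A family of d vectors in ℂ^d is an orthonormal basis. -/
def IsONB {d : ℕ} (V : Fin d → Fin d → ℂ) : Prop :=
  ∀ i j, braket (V i) (V j) = if i = j then 1 else 0

open Matrix Finset

theorem ConvexOn.sum_map_vecMul_le {𝕜 β n : Type*} [Field 𝕜] [LinearOrder 𝕜]
    [IsStrictOrderedRing 𝕜] [AddCommGroup β] [PartialOrder β] [IsOrderedAddMonoid β]
    [Module 𝕜 β] [IsStrictOrderedModule 𝕜 β] [Fintype n] [DecidableEq n]
    {s : Set 𝕜} {f : 𝕜 → β} (hf : ConvexOn 𝕜 s f)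
    {M : Matrix n n 𝕜} (hM : M ∈ doublyStochastic 𝕜 n) {x : n → 𝕜} (hx : ∀ i, x i ∈ s) :
    ∑ j, f ((x ᵥ* M) j) ≤ ∑ i, f (x i) :=
  calc ∑ j, f ((x ᵥ* M) j) = ∑ j, f (∑ i, M i j • x i) := by
        simp only [vecMul, dotProduct, smul_eq_mul, mul_comm]
    _ ≤ ∑ j, ∑ i, M i j • f (x i) := sum_le_sum fun j _ =>
        hf.map_sum_le (fun i _ => hM.1 i j) (sum_col_of_mem_doublyStochastic hM j)
          fun i _ => hx i
    _ = ∑ i, f (x i) := by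
        rw [sum_comm]
        simp only [← sum_smul, sum_row_of_mem_doublyStochastic hM, one_smul]

lemma braket_eq_inner {d : ℕ} (v w : Fin d → ℂ) :
    braket v w = inner ℂ (WithLp.toLp 2 v) (WithLp.toLp 2 w) := by
  simp [braket, PiLp.inner_apply, mul_comm]

lemma IsONB.orthonormal {d : ℕ} {V : Fin d → Fin d → ℂ} (hV : IsONB V) :
    Orthonormal ℂ fun i => WithLp.toLp 2 (V i) :=
  orthonormal_iff_ite.2 fun i j => by rw [← braket_eq_inner, hV]

def IsONB.toOrthonormalBasis {d : ℕ} {V : Fin d → Fin d → ℂ} (hV : IsONB V) :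
    OrthonormalBasis (Fin d) ℂ (EuclideanSpace ℂ (Fin d)) :=
  .mk hV.orthonormal
    (hV.orthonormal.linearIndependent.span_eq_top_of_card_eq_finrank' (by simp)).ge

@[simp]
lemma IsONB.coe_toOrthonormalBasis {d : ℕ} {V : Fin d → Fin d → ℂ} (hV : IsONB V) :
    ⇑hV.toOrthonormalBasis = fun i => WithLp.toLp 2 (V i) :=
  OrthonormalBasis.coe_mk _ _

theorem normSq_braket_mem_doublyStochastic {d : ℕ} {V B : Fin d → Fin d → ℂ}
    (hV : IsONB V) (hB : IsONB B) :
    of (fun i j => Complex.normSq (braket (V i) (B j))) ∈ doublyStochastic ℝ (Fin d) := by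
  simp only [mem_doublyStochastic_iff_sum, of_apply, Complex.normSq_eq_norm_sq, braket_eq_inner]
  refine ⟨fun _ _ => by positivity, fun i => ?_, fun j => ?_⟩
  · simpa [hV.orthonormal.1 i] using
      hB.toOrthonormalBasis.sum_sq_norm_inner_left (WithLp.toLp 2 (V i))
  · simpa [hB.orthonormal.1 j] using
      hV.toOrthonormalBasis.sum_sq_norm_inner_right (WithLp.toLp 2 (B j))

theorem entropy_le_effective_entropy_general {d : ℕ}
    (lam : Fin d → ℝ) (V B : Fin d → Fin d → ℂ)
    (hV : IsONB V) (hB : IsONB B)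
    (hlam_pos : ∀ i, 0 < lam i)
    (P : Fin d → Fin d → ℝ)
    (hP : ∀ i j, P i j = Complex.normSq (braket (V i) (B j)))
    (η : Fin d → ℝ) (hη : ∀ j, η j = ∑ i, P i j * lam i) :
    -∑ i, lam i * Real.log (lam i) ≤ -∑ j, η j * Real.log (η j) := by
  have hP_ds : of P ∈ doublyStochastic ℝ (Fin d) := by
    simpa only [← hP] using normSq_braket_mem_doublyStochastic hV hB
  obtain rfl : η = lam ᵥ* of P := funext fun j => by simp [hη, vecMul, dotProduct, mul_comm]
  exact neg_le_neg <| Real.convexOn_mul_log.sum_map_vecMul_le hP_ds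
    fun i => Set.mem_Ici.2 (hlam_pos i).le

/-- `S(ρ) ≤ S(ρ̃)`: the von Neumann entropy of the effective
density matrix is at least that of the original density matrix. -/
theorem entropy_le_effective_entropy {d : ℕ}
    (ρ : Matrix (Fin d) (Fin d) ℂ)
    (lam : Fin d → ℝ) (V B : Fin d → Fin d → ℂ)
    (hV : IsONB V) (hB : IsONB B)
    (hlam_pos : ∀ i, 0 < lam i) (hlam_sum : ∑ i, lam i = 1)
    (hρ : ρ = ∑ i, (lam i : ℂ) • ketbra (V i))
    (P : Fin d → Fin d → ℝ)
    (hP : ∀ i j, P i j = Complex.normSq (braket (V i) (B j)))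
    (η : Fin d → ℝ) (hη : ∀ j, η j = ∑ i, P i j * lam i)
    (hη_pos : ∀ j, 0 < η j)
    (ρt : Matrix (Fin d) (Fin d) ℂ)
    (hρt : ρt = ∑ j, (η j : ℂ) • ketbra (B j)) :
    -∑ i, lam i * Real.log (lam i) ≤ -∑ j, η j * Real.log (η j) :=
  entropy_le_effective_entropy_general lam V B hV hB hlam_pos P hP η hη
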